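/- Let Γ be a basic game and let c̄_a(y) = Σ_θ p(θ) c_a(y, θ) be the average cost functions. If ȳ ∈ Y is a Wardrop equilibrium of the average complete-information game, i.e., for all a, b ∈ A, ȳ_a > 0 implies c̄_a(ȳ) ≤ c̄_b(ȳ), then the outcome μ defined by μ(·|θ) = δ_{ȳ} for every θ (the Dirac measure at ȳ in every state) is a Bayes correlated Wardrop equilibrium of Γ. -/

import Mathlib

noncomputable section

namespace NonatomicGames

/-- An information structure: finitely many populations with sizes summing to one,
a finite type set per population, and a signal distribution `π θ` for each state. -/
structure InfoStructure (Θ : Type) where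
  K : Type
  [instFintypeK : Fintype K]
  [instDecEqK : DecidableEq K]
  T : K → Type
  [instFintypeT : ∀ k, Fintype (T k)]
  [instDecEqT : ∀ k, DecidableEq (T k)]
  γ : K → ℝ
  γ_pos : ∀ k, 0 < γ k
  γ_sum : ∑ k, γ k = 1
  π : Θ → (∀ k, T k) → ℝ
  π_nonneg : ∀ θ τ, 0 ≤ π θ τ
  π_sum : ∀ θ, ∑ τ, π θ τ = 1

attribute [instance] InfoStructure.instFintypeK InfoStructure.instDecEqK
  InfoStructure.instFintypeT InfoStructure.instDecEqT

/-- A direct information structure: the type set of each population is the action set `A`. -/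
structure DirectInfoStructure (A Θ : Type) [Fintype A] [DecidableEq A] where
  K : Type
  [instFintypeK : Fintype K]
  [instDecEqK : DecidableEq K]
  γ : K → ℝ
  γ_pos : ∀ k, 0 < γ k
  γ_sum : ∑ k, γ k = 1
  π : Θ → (K → A) → ℝ
  π_nonneg : ∀ θ τ, 0 ≤ π θ τ
  π_sum : ∀ θ, ∑ τ, π θ τ = 1

attribute [instance] DirectInfoStructure.instFintypeK DirectInfoStructure.instDecEqK

open MeasureTheory Finset

variable {A Θ : Type} [Fintype A] [DecidableEq A] [Fintype Θ]

/-- The information structure associated with a direct information structure. -/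
def DirectInfoStructure.toInfo (I : DirectInfoStructure A Θ) : InfoStructure Θ where
  K := I.K
  instFintypeK := I.instFintypeK
  instDecEqK := I.instDecEqK
  T := fun _ => A
  instFintypeT := fun _ => inferInstanceAs (Fintype A)
  instDecEqT := fun _ => inferInstanceAs (DecidableEq A)
  γ := I.γ
  γ_pos := I.γ_pos
  γ_sum := I.γ_sum
  π := I.π
  π_nonneg := I.π_nonneg
  π_sum := I.π_sum

/-- The obedient interim flow profile of a direct information structure:
population `k` receiving recommendation `t` puts all its mass `γ k` on action `t`. -/
def DirectInfoStructure.obedient (I : DirectInfoStructure A Θ) :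
    ∀ _k : I.K, A → A → ℝ :=
  fun k t a => if t = a then I.γ k else 0

/-- `yhat` is an interim flow profile: nonnegative flows summing to the population sizes. -/
def IsInterim (I : InfoStructure Θ) (yhat : ∀ k, I.T k → A → ℝ) : Prop :=
  (∀ k t a, 0 ≤ yhat k t a) ∧ ∀ k t, ∑ a, yhat k t a = I.γ k

/-- The interim total flow profile given the type profile `τ`. -/
def totalFlow (I : InfoStructure Θ) (yhat : ∀ k, I.T k → A → ℝ) (τ : ∀ k, I.T k) :
    A → ℝ :=
  fun a => ∑ k, yhat k (τ k) a

/-- The total probability `P(τᵏ)` of type `tk` for population `k`. -/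
def typeProb (I : InfoStructure Θ) (p : Θ → ℝ) (k : I.K) (tk : I.T k) : ℝ :=
  ∑ θ, ∑ τ : ∀ j, I.T j, if τ k = tk then p θ * I.π θ τ else 0

/-- Bayesian Wardrop ε-equilibrium of the basic game `(p, c)` extended with `I`. -/
def IsBWEps (I : InfoStructure Θ) (p : Θ → ℝ) (c : A → (A → ℝ) → Θ → ℝ) (ε : ℝ)
    (yhat : ∀ k, I.T k → A → ℝ) : Prop :=
  IsInterim I yhat ∧
  ∀ (k : I.K) (tk : I.T k), 0 < typeProb I p k tk →
    ∀ a b : A, 0 < yhat k tk a →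
      (∑ θ, ∑ τ : ∀ j, I.T j,
        if τ k = tk then
          p θ * I.π θ τ * (c a (totalFlow I yhat τ) θ - c b (totalFlow I yhat τ) θ)
        else 0)
      ≤ ε * typeProb I p k tk

/-- The outcome (state-dependent distribution over flow profiles) induced by `yhat`. -/
def outcomeMeasure (I : InfoStructure Θ) (yhat : ∀ k, I.T k → A → ℝ) (θ : Θ) :
    Measure (A → ℝ) :=
  ∑ τ : ∀ k, I.T k, ENNReal.ofReal (I.π θ τ) • Measure.dirac (totalFlow I yhat τ)

/-- The probability that the induced outcome puts on the flow profile `z` in state `θ`. -/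
def outcomeWeight (I : InfoStructure Θ) (yhat : ∀ k, I.T k → A → ℝ) (θ : Θ)
    (z : A → ℝ) : ℝ :=
  ∑ τ : ∀ k, I.T k, if totalFlow I yhat τ = z then I.π θ τ else 0

/-- The auxiliary (non-normalized interim) cost `C_a^{k,τᵏ}(yhat)`. -/
def auxCost (I : InfoStructure Θ) (p : Θ → ℝ) (c : A → (A → ℝ) → Θ → ℝ)
    (yhat : ∀ k, I.T k → A → ℝ) (k : I.K) (tk : I.T k) (a : A) : ℝ :=
  ∑ θ, ∑ τ : ∀ j, I.T j,
    if τ k = tk then p θ * I.π θ τ * c a (totalFlow I yhat τ) θ else 0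

/-- The potential `Φ_π` of the auxiliary multi-population game. -/
def potPi (I : InfoStructure Θ) (p : Θ → ℝ) (Φ : Θ → (A → ℝ) → ℝ)
    (yhat : ∀ k, I.T k → A → ℝ) : ℝ :=
  ∑ θ, ∑ τ : ∀ k, I.T k, p θ * I.π θ τ * Φ θ (totalFlow I yhat τ)

/-- The social cost `SC(y, θ) = Σ_a y_a c_a(y, θ)`. -/
def socialCost (c : A → (A → ℝ) → Θ → ℝ) (y : A → ℝ) (θ : Θ) : ℝ :=
  ∑ a, y a * c a y θ

/-- The total cost `TC(yhat)`. -/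
def totalCost (I : InfoStructure Θ) (p : Θ → ℝ) (c : A → (A → ℝ) → Θ → ℝ)
    (yhat : ∀ k, I.T k → A → ℝ) : ℝ :=
  ∑ k, ∑ tk : I.T k, ∑ a, yhat k tk a * auxCost I p c yhat k tk a

/-- An outcome: a state-dependent Borel probability measure supported on the simplex `Y`. -/
def IsOutcome (μ : Θ → Measure (A → ℝ)) : Prop :=
  (∀ θ, IsProbabilityMeasure (μ θ)) ∧ ∀ θ, μ θ (stdSimplex ℝ A)ᶜ = 0

/-- Bayes correlated Wardrop equilibrium of the basic game `(p, c)`. -/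
def IsBCWE (p : Θ → ℝ) (c : A → (A → ℝ) → Θ → ℝ) (μ : Θ → Measure (A → ℝ)) : Prop :=
  IsOutcome μ ∧
  ∀ a b : A,
    ∑ θ, p θ * ∫ y, y a * c a y θ ∂(μ θ) ≤ ∑ θ, p θ * ∫ y, y a * c b y θ ∂(μ θ)

/-- `Φ` is a (state-by-state) potential for the cost profile `c`: for each state it is
continuously differentiable on an open neighborhood of the simplex and its partial
derivative in the direction of each action `a` is the cost of `a`. -/
def IsPotential (c : A → (A → ℝ) → Θ → ℝ) (Φ : Θ → (A → ℝ) → ℝ) : Prop :=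
  ∀ θ, ∃ U : Set (A → ℝ), IsOpen U ∧ stdSimplex ℝ A ⊆ U ∧
    ContDiffOn ℝ 1 (Φ θ) U ∧
    ∀ y ∈ stdSimplex ℝ A, ∀ a, fderiv ℝ (Φ θ) y (Pi.single a 1) = c a y θ

theorem isOutcome_dirac {A Θ : Type} [Fintype A] {y : A → ℝ} (hy : y ∈ stdSimplex ℝ A) :
    IsOutcome (fun _ : Θ => Measure.dirac y) := by
  refine ⟨fun _ => inferInstance, fun _ => ?_⟩
  rw [Measure.dirac_apply' _ (isClosed_stdSimplex ℝ A).measurableSet.compl]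
  simp [hy]

theorem non_revealing_BCWE_general
    (p : Θ → ℝ)
    (c : A → (A → ℝ) → Θ → ℝ)
    (ybar : A → ℝ) (hybar : ybar ∈ stdSimplex ℝ A)
    (hWE : ∀ a b : A, 0 < ybar a →
      ∑ θ, p θ * c a ybar θ ≤ ∑ θ, p θ * c b ybar θ) :
    IsBCWE p c (fun _ => MeasureTheory.Measure.dirac ybar) := by
  refine ⟨isOutcome_dirac hybar, fun a b => ?_⟩
  have expected_flow_cost (d : A) :
      ∑ θ, p θ * ∫ y, y a * c d y θ ∂(Measure.dirac ybar) =
        ybar a * ∑ θ, p θ * c d ybar θ := by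
    simp only [integral_dirac, Finset.mul_sum, mul_left_comm]
  rw [expected_flow_cost, expected_flow_cost]
  rcases (hybar.1 a).eq_or_lt with h | h
  · simp [← h]
  · exact mul_le_mul_of_nonneg_left (hWE a b h) h.le

/-- a Wardrop equilibrium of the average game gives a non-revealing
BCWE. -/
theorem non_revealing_BCWE
    (p : Θ → ℝ) (hp_pos : ∀ θ, 0 < p θ) (hp_sum : ∑ θ, p θ = 1)
    (c : A → (A → ℝ) → Θ → ℝ)
    (hc : ∀ a θ, ContinuousOn (fun y => c a y θ) (stdSimplex ℝ A))
    (ybar : A → ℝ) (hybar : ybar ∈ stdSimplex ℝ A)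
    (hWE : ∀ a b : A, 0 < ybar a →
      ∑ θ, p θ * c a ybar θ ≤ ∑ θ, p θ * c b ybar θ) :
    IsBCWE p c (fun _ => MeasureTheory.Measure.dirac ybar) :=
  non_revealing_BCWE_general p c ybar hybar hWE

end NonatomicGames
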